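/- arXiv:0708.4409 — 5 statements merged into one kernel-verified Lean document; each statement's English description precedes it below -/
import Mathlib

section
/- For any nonempty finite word w over a totally ordered finite alphabet A, the word min(w) is a suffix of w; moreover, min(w) has exactly one occurrence as a factor of w. -/
/-- The prefix of length `k` of an infinite word `t`. -/
def prefixList {A : Type*} (t : ℕ → A) (k : ℕ) : List A := (List.range k).map t

/-- `u` occurs as a factor of the infinite word `t` at position `i`. -/
def FactorAt {A : Type*} (t : ℕ → A) (u : List A) (i : ℕ) : Prop :=
  u = (List.range u.length).map (fun j => t (i + j))

/-- `u` is a (finite) factor of the infinite word `t`. -/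
def IsFactorInf {A : Type*} (t : ℕ → A) (u : List A) : Prop := ∃ i, FactorAt t u i

/-- An infinite word is recurrent if each of its factors occurs infinitely often. -/
def Recurrent {A : Type*} (t : ℕ → A) : Prop :=
  ∀ u, IsFactorInf t u → ∀ N, ∃ i, N ≤ i ∧ FactorAt t u i

/-- `u` is a right special factor of `t`. -/
def RightSpecial {A : Type*} (t : ℕ → A) (u : List A) : Prop :=
  ∃ a b : A, a ≠ b ∧ IsFactorInf t (u ++ [a]) ∧ IsFactorInf t (u ++ [b])

/-- `u` is a left special factor of `t`. -/
def LeftSpecial {A : Type*} (t : ℕ → A) (u : List A) : Prop :=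
  ∃ a b : A, a ≠ b ∧ IsFactorInf t (a :: u) ∧ IsFactorInf t (b :: u)

/-- An infinite word is episturmian if its set of factors is closed under reversal
and it has at most one right special factor of each length. -/
def Episturmian {A : Type*} (t : ℕ → A) : Prop :=
  (∀ u, IsFactorInf t u → IsFactorInf t u.reverse) ∧
  (∀ u v, RightSpecial t u → RightSpecial t v → u.length = v.length → u = v)

/-- A standard episturmian word: episturmian with all left special factors prefixes. -/
def StdEpisturmian {A : Type*} (t : ℕ → A) : Prop :=
  Episturmian t ∧ ∀ u, LeftSpecial t u → u = prefixList t u.length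

/-- A finite word is finite episturmian if it is a factor of some episturmian infinite word. -/
def FiniteEpisturmian {A : Type*} (w : List A) : Prop :=
  ∃ t : ℕ → A, Episturmian t ∧ IsFactorInf t w

/-- An acceptable pair: a strict total order `r` on `A` together with a letter `a`
that is minimal for `r`. -/
def AcceptablePair {A : Type*} (r : A → A → Prop) (a : A) : Prop :=
  IsStrictTotalOrder A r ∧ ∀ b, b ≠ a → r a b

/-- Non-strict lexicographic order on finite words induced by the order `r` on letters. -/
def listLe {A : Type*} (r : A → A → Prop) (u v : List A) : Prop := u = v ∨ List.Lex r u v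

/-- Non-strict lexicographic order on infinite words induced by the order `r` on letters. -/
def infLe {A : Type*} (r : A → A → Prop) (x y : ℕ → A) : Prop :=
  x = y ∨ ∃ i, (∀ j, j < i → x j = y j) ∧ r (x i) (y i)

/-- `m` is the lexicographically smallest factor of the finite word `w` of length `k`. -/
def IsMinFacLen {A : Type*} (r : A → A → Prop) (w : List A) (k : ℕ) (m : List A) : Prop :=
  m <:+: w ∧ m.length = k ∧ ∀ u, u <:+: w → u.length = k → listLe r m u

/-- `m` is the lexicographically greatest factor of the finite word `w` of length `k`. -/
def IsMaxFacLen {A : Type*} (r : A → A → Prop) (w : List A) (k : ℕ) (m : List A) : Prop :=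
  m <:+: w ∧ m.length = k ∧ ∀ u, u <:+: w → u.length = k → listLe r u m

/-- `m = min(w)`: for each `j ≤ |m|` the prefix of `m` of length `j` is `min(w|j)`,
and `|m|` is maximal with this chain property. -/
def IsMinFin {A : Type*} (r : A → A → Prop) (w m : List A) : Prop :=
  m ≠ [] ∧
  (∀ j, j ≤ m.length → IsMinFacLen r w j (m.take j)) ∧
  (∀ m', IsMinFacLen r w (m.length + 1) m' → ¬ m <+: m')

/-- `m = max(w)` (finite word version). -/
def IsMaxFin {A : Type*} (r : A → A → Prop) (w m : List A) : Prop :=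
  m ≠ [] ∧
  (∀ j, j ≤ m.length → IsMaxFacLen r w j (m.take j)) ∧
  (∀ m', IsMaxFacLen r w (m.length + 1) m' → ¬ m <+: m')

/-- `m = min(t)` for an infinite word `t`: each prefix of `m` is the lexicographically
smallest factor of `t` of its length. -/
def IsMinInf {A : Type*} (r : A → A → Prop) (t m : ℕ → A) : Prop :=
  ∀ k, IsFactorInf t (prefixList m k) ∧
    ∀ u, IsFactorInf t u → u.length = k → listLe r (prefixList m k) u

/-- `m = max(t)` for an infinite word `t`. -/
def IsMaxInf {A : Type*} (r : A → A → Prop) (t m : ℕ → A) : Prop :=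
  ∀ k, IsFactorInf t (prefixList m k) ∧
    ∀ u, IsFactorInf t u → u.length = k → listLe r u (prefixList m k)

/-- Prepend a letter to an infinite word. -/
def consInf {A : Type*} (a : A) (t : ℕ → A) : ℕ → A
  | 0 => a
  | n + 1 => t n

/-- Prepend a finite word to an infinite word. -/
def wordAppend {A : Type*} (v : List A) (t : ℕ → A) : ℕ → A :=
  fun n => if h : n < v.length then v.get ⟨n, h⟩ else t (n - v.length)

/-- The pure epistandard morphism `ψ_z` on finite words: it fixes `z` and sends
each letter `x ≠ z` to `zx`. -/
def psiW {A : Type*} [DecidableEq A] (z : A) (w : List A) : List A :=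
  (w.map (fun x => if x = z then [z] else [z, x])).flatten

/-- The finite word `u` is a prefix of the infinite word `t`. -/
def IsPrefixInf {A : Type*} (u : List A) (t : ℕ → A) : Prop := u = prefixList t u.length

/-- `y = f(t)`: the infinite word `y` is the image of the infinite word `t` under the
(non-erasing) morphism `f`, acting letter by letter. -/
def IsMorphImage {A : Type*} (f : List A → List A) (t y : ℕ → A) : Prop :=
  ∀ k, IsPrefixInf (f (prefixList t k)) y

/-- Pure epistandard morphisms: finite compositions of the morphisms `ψ_a`. -/
inductive PureEpistandard {A : Type*} [DecidableEq A] : (List A → List A) → Prop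
  | id : PureEpistandard _root_.id
  | comp (a : A) (f : List A → List A) : PureEpistandard f →
      PureEpistandard (fun w => psiW a (f w))

/-- An infinite word is episkew if it is non-recurrent and all of its factors
are finite episturmian. -/
def Episkew {A : Type*} (t : ℕ → A) : Prop :=
  ¬ Recurrent t ∧ ∀ u, IsFactorInf t u → FiniteEpisturmian u

/- Two-letter (Bool) notions: `false` plays the role of `a`, `true` of `b`,
with the order `false < true`. -/

/-- A finite binary word is balanced. -/
def BalancedList (w : List Bool) : Prop :=
  ∀ u v : List Bool, u <:+: w → v <:+: w → u.length = v.length →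
    |(u.count true : ℤ) - (v.count true : ℤ)| ≤ 1

/-- An infinite binary word is balanced. -/
def BalancedInf (t : ℕ → Bool) : Prop :=
  ∀ u v : List Bool, IsFactorInf t u → IsFactorInf t v → u.length = v.length →
    |(u.count true : ℤ) - (v.count true : ℤ)| ≤ 1

/-- The Sturmian word of slope `α` and intercept `ρ` defined via floors. -/
def SturmianFloor (α ρ : ℝ) (t : ℕ → Bool) : Prop :=
  ∀ n : ℕ, t n = true ↔ ⌊((n : ℝ) + 1) * α + ρ⌋ ≠ ⌊(n : ℝ) * α + ρ⌋

/-- The Sturmian word of slope `α` and intercept `ρ` defined via ceilings. -/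
def SturmianCeil (α ρ : ℝ) (t : ℕ → Bool) : Prop :=
  ∀ n : ℕ, t n = true ↔ ⌈((n : ℝ) + 1) * α + ρ⌉ ≠ ⌈(n : ℝ) * α + ρ⌉

/-- Aperiodic Sturmian words: those of irrational slope. -/
def IsAperiodicSturmian (t : ℕ → Bool) : Prop :=
  ∃ α ρ : ℝ, α ∈ Set.Icc (0 : ℝ) 1 ∧ ρ ∈ Set.Icc (0 : ℝ) 1 ∧ Irrational α ∧
    (SturmianFloor α ρ t ∨ SturmianCeil α ρ t)

/-- Standard Sturmian words: those with `ρ = α`. -/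
def IsStandardSturmian (t : ℕ → Bool) : Prop :=
  ∃ α : ℝ, α ∈ Set.Icc (0 : ℝ) 1 ∧ (SturmianFloor α α t ∨ SturmianCeil α α t)

/-- A fine infinite binary word: `(min(t), max(t)) = (a·s, b·s)` for some infinite word `s`. -/
def FineBool (t : ℕ → Bool) : Prop :=
  ∃ s : ℕ → Bool, IsMinInf (· < ·) t (consInf false s) ∧ IsMaxInf (· < ·) t (consInf true s)

/-- A periodic infinite word. -/
def PeriodicInf {A : Type*} (t : ℕ → A) : Prop := ∃ p, 0 < p ∧ ∀ i, t (i + p) = t i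

/-- An ultimately periodic infinite word. -/
def UltPeriodicInf {A : Type*} (t : ℕ → A) : Prop :=
  ∃ p, 0 < p ∧ ∃ m, ∀ i, m ≤ i → t (i + p) = t i

private lemma lex_append_aux {A : Type*} {r : A → A → Prop} :
    ∀ {u v : List A}, List.Lex r u v → u.length = v.length →
      ∀ (s t : List A), List.Lex r (u ++ s) (v ++ t)
  | _, _, .nil, h => by simp at h
  | _, _, .rel hab, _ => fun _ _ => .rel hab
  | _, _, .cons h, hlen => fun s t =>
      .cons (lex_append_aux h (by simpa using hlen) s t)

/-- For any nonempty finite word `w` and total order on the finite alphabet,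
`min(w)` is a suffix of `w` and has exactly one occurrence as a factor of `w`. -/
theorem min_isSuffix_and_unioccurrent {A : Type*} [Fintype A] [DecidableEq A]
    (r : A → A → Prop) (hr : IsStrictTotalOrder A r) (w : List A) (hw : w ≠ []) :
    ∀ m : List A, IsMinFin r w m →
      m <:+ w ∧
      ∀ s₁ t₁ s₂ t₂ : List A, w = s₁ ++ m ++ t₁ → w = s₂ ++ m ++ t₂ → s₁ = s₂ := by
  intro m hm
  obtain ⟨hne, hmin, hmax⟩ := hm
  haveI := hr
  haveI : DecidableRel r := fun _ _ => Classical.dec _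
  letI : LinearOrder A := linearOrderOfSTO r
  have hrlt : ∀ x y : A, r x y ↔ x < y := fun _ _ => Iff.rfl
  have hlex : ∀ u v : List A, List.Lex r u v ↔ u < v := fun _ _ => Iff.rfl
  -- key: no occurrence of m is followed by a letter
  have key : ∀ (s t : List A) (a : A), w ≠ s ++ m ++ (a :: t) := by
    intro s t a hw'
    have hfac : (m ++ [a]) <:+: w := ⟨s, t, by rw [hw']; simp⟩
    set k := m.length + 1 with hk
    classical
    let S : Finset (List A) :=
      (w.sublists.filter fun u => u <:+: w ∧ u.length = k).toFinset
    have hmem : ∀ u, u ∈ S ↔ u <:+: w ∧ u.length = k := by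
      intro u
      simp only [S, List.mem_toFinset, List.mem_filter, List.mem_sublists,
        decide_eq_true_eq]
      constructor
      · rintro ⟨-, h⟩; exact h
      · rintro ⟨h1, h2⟩; exact ⟨h1.sublist, h1, h2⟩
    have hSne : S.Nonempty := ⟨m ++ [a], (hmem _).2 ⟨hfac, by simp [hk]⟩⟩
    set m' := S.min' hSne with hm'def
    obtain ⟨hm'fac, hm'len⟩ := (hmem m').1 (S.min'_mem hSne)
    have hm'le : ∀ u, u <:+: w → u.length = k → m' ≤ u := fun u h1 h2 =>
      S.min'_le u ((hmem u).2 ⟨h1, h2⟩)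
    -- m ≤ m'.take m.length
    have htfac : m'.take m.length <:+: w :=
      (List.take_prefix m.length m').isInfix.trans hm'fac
    have htlen : (m'.take m.length).length = m.length := by
      simp [hm'len, hk]
    have hmmin := hmin m.length le_rfl
    rw [List.take_length] at hmmin
    have hle1 : m ≤ m'.take m.length := by
      rcases hmmin.2.2 _ htfac htlen with h | h
      · exact le_of_eq h
      · exact le_of_lt ((hlex _ _).1 h)
    rcases eq_or_lt_of_le hle1 with heq | hlt
    · -- m is a prefix of m', contradicting maximality
      refine hmax m' ⟨hm'fac, hm'len, fun u h1 h2 => ?_⟩ ?_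
      · rcases lt_or_eq_of_le (hm'le u h1 h2) with h | h
        · exact Or.inr ((hlex _ _).2 h)
        · exact Or.inl h
      · exact heq ▸ List.take_prefix m.length m'
    · -- m ++ [a] < m', contradicting minimality of m'
      have h2 : m ++ [a] < m'.take m.length ++ m'.drop m.length :=
        (hlex _ _).1 (lex_append_aux ((hlex _ _).2 hlt) htlen.symm [a] _)
      rw [List.take_append_drop] at h2
      exact absurd (hm'le (m ++ [a]) hfac (by simp [hk])) (not_le.2 h2)
  -- every occurrence of m is a suffix occurrence
  have hend : ∀ s t : List A, w = s ++ m ++ t → t = [] := by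
    intro s t hw'
    cases t with
    | nil => rfl
    | cons a t' => exact absurd hw' (key s t' a)
  constructor
  · obtain ⟨s, t, hw'⟩ := (hmin m.length le_rfl).1
    rw [List.take_length] at hw'
    have := hend s t hw'.symm
    exact ⟨s, by rw [this, List.append_nil] at hw'; exact hw'⟩
  · intro s₁ t₁ s₂ t₂ h1 h2
    have e1 := hend s₁ t₁ h1
    have e2 := hend s₂ t₂ h2
    subst e1; subst e2
    simp only [List.append_nil] at h1 h2
    exact List.append_cancel_right (h1 ▸ h2 : s₁ ++ m = s₂ ++ m)
end

section
/- Let A be a finite alphabet with a total order <, let z ∈ A, and let w, w' be finite words with w' nonempty such that w = ψ_z(w') and w does not end with the letter z. Then: if min(w) begins with z, min(w) = ψ_z(min(w')); otherwise, min(w) = z^{-1}ψ_z(min(w')), i.e., min(w) is obtained from ψ_z(min(w')) by deleting its first letter z. -/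
/-!
Write `min(w') = c m''`. A factor of `ψ_z(w')` that begins with `z` is a prefix of `ψ_z(t)` for
a factor `t` of `w'`, and `ψ_z` preserves the lexicographic order of words truncated to a common
length, so `ψ_z(min(w'))` lies below every such factor; a factor beginning with another letter is
preceded by `z` in `ψ_z(w')`. If `z ≤ c`, every letter of `w` other than `z` exceeds `z`, and
`ψ_z(min(w'))` lies below every factor. If `c < z`, the factors beginning with `z` lose at the first
letter against `c ψ_z(m'')`, and the others are compared after prepending `z`. Neither candidate
extends by a letter inside `w`: desubstituting such an extension extends `min(w')` inside `w'`,
unless `min(w')` ends with `z`; but a non-extendable factor occurs only as a suffix, so `w'`, and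
with it `w`, would end with `z`. Since `min(w)` is unique, it is the candidate.
-/

section Words

variable {A : Type*}

section Lex

variable {r : A → A → Prop}

theorem listLe_nil_left (v : List A) : listLe r [] v :=
  (List.lex_nil_or_eq_nil v).elim Or.inr fun h => Or.inl h.symm

theorem listLe_antisymm [Std.Asymm r] {u v : List A} (huv : listLe r u v) (hvu : listLe r v u) :
    u = v := by
  rcases huv with rfl | huv
  · rfl
  rcases hvu with rfl | hvu
  · rfl
  exact absurd hvu (asymm huv)

theorem listLe_take {u v : List A} (h : listLe r u v) (j : ℕ) :
    listLe r (u.take j) (v.take j) := by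
  rcases h with rfl | h
  · exact Or.inl rfl
  induction h generalizing j with
  | nil => simpa using listLe_nil_left _
  | cons _ ih =>
    cases j with
    | zero => exact Or.inl rfl
    | succ j =>
      simp only [List.take_succ_cons]
      exact (ih j).imp (congrArg _) List.Lex.cons
  | rel hab =>
    cases j with
    | zero => exact Or.inl rfl
    | succ j => exact Or.inr (List.Lex.rel hab)

instance [IsStrictTotalOrder A r] : IsStrictTotalOrder (List A) (List.Lex r) where
  irrefl := List.lex_irrefl (irrefl_of r)
  trans _ _ _ := List.lex_trans (trans_of r)

def TakeLe (r : A → A → Prop) (s v : List A) : Prop :=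
  ∀ j ≤ s.length, j ≤ v.length → listLe r (s.take j) (v.take j)

theorem takeLe_of_isPrefix {s v : List A} (h : s <+: v) : TakeLe r s v := fun j hj _ => by
  obtain ⟨t, rfl⟩ := h
  rw [List.take_append_of_le_length hj]
  exact Or.inl rfl

theorem takeLe_of_isPrefix' {s v : List A} (h : v <+: s) : TakeLe r s v := fun j _ hj => by
  obtain ⟨t, rfl⟩ := h
  rw [List.take_append_of_le_length hj]
  exact Or.inl rfl

theorem takeLe_cons_of_rel {a b : A} (hab : r a b) (s v : List A) :
    TakeLe r (a :: s) (b :: v)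
  | 0, _, _ => Or.inl rfl
  | _ + 1, _, _ => Or.inr (List.Lex.rel hab)

theorem TakeLe.append_left {s v : List A} (h : TakeLe r s v) (p : List A) :
    TakeLe r (p ++ s) (p ++ v) := fun j hjs hjv => by
  simp only [List.take_append]
  rcases h (j - p.length) (by simp at hjs; omega) (by simp at hjv; omega) with h | h
  · exact Or.inl (by rw [h])
  · exact Or.inr (h.append_left _ _)

theorem TakeLe.of_cons {a : A} (ha : ¬ r a a) {s v : List A} (h : TakeLe r (a :: s) (a :: v)) :
    TakeLe r s v := fun j hjs hjv => by
  rcases h (j + 1) (by simpa using hjs) (by simpa using hjv) with heq | hlex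
  · exact Or.inl (List.cons_injective heq)
  · exact Or.inr ((List.cons_lex_cons_iff.mp hlex).resolve_left ha).2

theorem TakeLe.of_isPrefix_right {s u v : List A} (h : TakeLe r s v) (hu : u <+: v) :
    TakeLe r s u := fun j hjs hju => by
  obtain ⟨t, rfl⟩ := hu
  have := h j hjs (by simp; omega)
  rwa [List.take_append_of_le_length hju] at this

end Lex

section Psi

variable [DecidableEq A] (z : A)

@[simp]
theorem psiW_nil : psiW z ([] : List A) = [] := rfl

theorem psiW_cons (a : A) (s : List A) :
    psiW z (a :: s) = z :: (if a = z then psiW z s else a :: psiW z s) := by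
  simp only [psiW, List.map_cons, List.flatten_cons]
  split_ifs <;> rfl

@[simp]
theorem psiW_append (s t : List A) : psiW z (s ++ t) = psiW z s ++ psiW z t := by
  simp [psiW]

theorem psiW_cons_eq_append (a : A) (s : List A) : psiW z (a :: s) = psiW z [a] ++ psiW z s := by
  rw [← psiW_append, List.singleton_append]

theorem psiW_cons_eq_cons_cons_or (a : A) (s : List A) :
    (a = z ∧ s = []) ∨ ∃ u, psiW z (a :: s) = z :: a :: u := by
  rw [psiW_cons]
  by_cases ha : a = z
  · subst ha
    cases s with
    | nil => exact Or.inl ⟨rfl, rfl⟩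
    | cons b s => exact Or.inr ⟨_, by rw [if_pos rfl, psiW_cons]⟩
  · exact Or.inr ⟨_, by rw [if_neg ha]⟩

theorem mem_of_mem_psiW {x : A} {s : List A} (h : x ∈ psiW z s) (hx : x ≠ z) : x ∈ s := by
  simp only [psiW, List.mem_flatten, List.mem_map] at h
  obtain ⟨_, ⟨a, ha, rfl⟩, hxa⟩ := h
  split_ifs at hxa <;> simp_all

@[simp]
theorem getLast?_psiW (s : List A) : (psiW z s).getLast? = some z ↔ s.getLast? = some z := by
  induction s using List.reverseRecOn with
  | nil => simp
  | append_singleton s a _ =>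
    simp only [psiW_append, psiW_cons, psiW_nil]
    split_ifs with ha <;> simp [ha]

theorem List.IsInfix.psiW {u v : List A} (h : u <:+: v) :
    _root_.psiW z u <:+: _root_.psiW z v := by
  obtain ⟨s, t, rfl⟩ := h
  exact ⟨_root_.psiW z s, _root_.psiW z t, by simp⟩

theorem TakeLe.psiW {r : A → A → Prop} :
    ∀ {s v : List A}, TakeLe r s v → TakeLe r (_root_.psiW z s) (_root_.psiW z v)
  | [], _, _ => takeLe_of_isPrefix (by simp)
  | _, [], _ => takeLe_of_isPrefix' (by simp)
  | a :: s, b :: v, h => by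
    by_cases hab : r a b
    · rcases psiW_cons_eq_cons_cons_or z a s with ⟨rfl, rfl⟩ | ⟨u, hu⟩
      · exact takeLe_of_isPrefix (by simp [psiW_cons _ b, psiW_cons _ a])
      rcases psiW_cons_eq_cons_cons_or z b v with ⟨rfl, rfl⟩ | ⟨u', hv⟩
      · exact takeLe_of_isPrefix' (by simp [hu, psiW_cons])
      · rw [hu, hv]
        exact (takeLe_cons_of_rel hab u u').append_left [z]
    · obtain rfl : a = b := by
        simpa [listLe, hab] using h 1 (by simp) (by simp)
      rw [psiW_cons_eq_append, psiW_cons_eq_append _ a v]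
      exact (TakeLe.psiW (h.of_cons hab)).append_left _

end Psi

section PsiFactors

variable [DecidableEq A] {z : A}

theorem exists_of_isSuffix_psiW {S w : List A} (h : S <:+ psiW z w) :
    ∃ t, t <:+ w ∧ (S = psiW z t ∨ ∃ x, x ≠ z ∧ x :: t <:+ w ∧ S = x :: psiW z t) := by
  induction w with
  | nil => exact ⟨[], List.suffix_refl _, Or.inl (List.eq_nil_of_suffix_nil h)⟩
  | cons c w ih =>
    have lift : ∀ {t}, t <:+ w → t <:+ c :: w := fun ht => ht.trans (List.suffix_cons _ _)
    rw [psiW_cons, List.suffix_cons_iff] at h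
    rcases h with h | h
    · exact ⟨c :: w, List.suffix_refl _, Or.inl (by rw [h, psiW_cons])⟩
    split_ifs at h with hc
    · obtain ⟨t, ht, hS⟩ := ih h
      exact ⟨t, lift ht, hS.imp_right fun ⟨x, hx, hxt, hS⟩ => ⟨x, hx, lift hxt, hS⟩⟩
    rw [List.suffix_cons_iff] at h
    rcases h with h | h
    · exact ⟨w, lift (List.suffix_refl _), Or.inr ⟨c, hc, List.suffix_refl _, h⟩⟩
    obtain ⟨t, ht, hS⟩ := ih h
    exact ⟨t, lift ht, hS.imp_right fun ⟨x, hx, hxt, hS⟩ => ⟨x, hx, lift hxt, hS⟩⟩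

theorem exists_isSuffix_prefix_psiW {u w : List A} (h : z :: u <:+: psiW z w) :
    ∃ t, t <:+ w ∧ z :: u <+: psiW z t := by
  obtain ⟨S, hu, hS⟩ := List.infix_iff_prefix_suffix.mp h
  obtain ⟨t, ht, rfl | ⟨x, hx, -, rfl⟩⟩ := exists_of_isSuffix_psiW hS
  · exact ⟨t, ht, hu⟩
  · exact absurd (List.cons_prefix_cons.mp hu).1.symm hx

theorem cons_infix_psiW {x : A} {u w : List A} (hx : x ≠ z) (h : x :: u <:+: psiW z w) :
    z :: x :: u <:+: psiW z w := by
  obtain ⟨S, hu, hS⟩ := List.infix_iff_prefix_suffix.mp h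
  obtain ⟨t, -, rfl | ⟨y, hy, hyt, rfl⟩⟩ := exists_of_isSuffix_psiW hS
  · cases t with
    | nil => simp at hu
    | cons c t => exact absurd (List.cons_prefix_cons.mp (psiW_cons z c t ▸ hu)).1 hx
  · obtain ⟨rfl, hut⟩ := List.cons_prefix_cons.mp hu
    have hxt := hyt.isInfix.psiW z
    rw [psiW_cons, if_neg hy] at hxt
    exact (List.prefix_cons_inj _ |>.mpr (List.prefix_cons_inj _ |>.mpr hut)).isInfix.trans hxt

-- `ψ(s₀z) = ψ(s₀)z` is a prefix of `ψ(s₀b) = ψ(s₀)zb` for every letter `b ≠ z`.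
theorem exists_append_prefix_of_psiW_append_prefix {x : A} :
    ∀ {s t : List A}, psiW z s ++ [x] <+: psiW z t → (∃ y, s ++ [y] <+: t) ∨ s.getLast? = some z
  | [], [], h => by simp at h
  | [], b :: _, _ => Or.inl ⟨b, by simp⟩
  | _ :: _, [], h => by simp [psiW_cons] at h
  | a :: s, b :: t, h => by
    by_cases hab : a = b
    · subst hab
      rw [psiW_cons_eq_append, psiW_cons_eq_append _ a t, List.append_assoc,
        List.prefix_append_right_inj] at h
      rcases exists_append_prefix_of_psiW_append_prefix h with ⟨y, hy⟩ | hlast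
      · exact Or.inl ⟨y, List.prefix_cons_inj _ |>.mpr hy⟩
      · cases s with
        | nil => simp at hlast
        | cons c s => exact Or.inr (by simpa using hlast)
    · rcases psiW_cons_eq_cons_cons_or z a s with ⟨rfl, rfl⟩ | ⟨u, hu⟩
      · exact Or.inr rfl
      exfalso
      rcases psiW_cons_eq_cons_cons_or z b t with ⟨rfl, rfl⟩ | ⟨v, hv⟩
      · simp [hu, psiW_cons] at h
      · simp [hu, hv, hab] at h

end PsiFactors

section MinFactor

variable {r : A → A → Prop}

theorem IsMinFin.isInfix {w m : List A} (hm : IsMinFin r w m) : m <:+: w := by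
  simpa using (hm.2.1 m.length le_rfl).1

theorem IsMinFin.takeLe {w m u : List A} (hm : IsMinFin r w m) (hu : u <:+: w) : TakeLe r m u :=
  fun j hjm hju =>
    (hm.2.1 j hjm).2.2 _ ((List.take_prefix j u).isInfix.trans hu) (by simpa using hju)

theorem IsMinFin.rel_of_mem {w m : List A} {c x : A} (hm : IsMinFin r w (c :: m)) (hx : x ∈ w)
    (hxc : x ≠ c) : r c x := by
  obtain ⟨s, t, rfl⟩ := List.append_of_mem hx
  have := hm.takeLe (u := [x]) ⟨s, t, by simp⟩ 1 (by simp) (by simp)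
  simpa [listLe, Ne.symm hxc] using this

theorem isMinFin_of_takeLe {w m : List A} (hne : m ≠ []) (hm : m <:+: w)
    (hle : ∀ u, u <:+: w → TakeLe r m u) (hext : ∀ x, ¬ m ++ [x] <:+: w) : IsMinFin r w m := by
  refine ⟨hne, fun j hj => ⟨(List.take_prefix j m).isInfix.trans hm, by simpa using hj,
    fun u hu hul => ?_⟩, ?_⟩
  · simpa [← hul] using hle u hu u.length (by omega) le_rfl
  · rintro M hM ⟨t, rfl⟩
    obtain ⟨x, rfl⟩ : ∃ x, t = [x] := List.length_eq_one_iff.mp (by simpa using hM.2.1)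
    exact hext x hM.1

variable [IsStrictTotalOrder A r]

theorem exists_isMinFacLen {w u : List A} (hu : u <:+: w) : ∃ m, IsMinFacLen r w u.length m := by
  classical
  have hfin : {v | v <:+: w ∧ v.length = u.length}.Finite :=
    w.sublists.toFinset.finite_toSet.subset fun v hv => by simpa using hv.1.sublist
  obtain ⟨m, ⟨hmw, hmk⟩, hmin⟩ := (Set.wellFoundedOn_iff.mp
    (hfin.wellFoundedOn (r := List.Lex r))).has_min {v | v <:+: w ∧ v.length = u.length}
      ⟨u, hu, rfl⟩
  refine ⟨m, hmw, hmk, fun v hv hvk => ?_⟩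
  rcases trichotomous_of (List.Lex r) m v with h | h | h
  · exact Or.inr h
  · exact Or.inl h
  · exact absurd ⟨h, ⟨hv, hvk⟩, ⟨hmw, hmk⟩⟩ (hmin v ⟨hv, hvk⟩)

theorem IsMinFin.not_append_infix {w m : List A} (hm : IsMinFin r w m) (x : A) :
    ¬ m ++ [x] <:+: w := by
  intro hx
  obtain ⟨M, hM⟩ := exists_isMinFacLen (r := r) hx
  have hle : listLe r m (M.take m.length) := by
    simpa using hm.takeLe hM.1 m.length le_rfl (by simp [hM.2.1])
  have hge : listLe r (M.take m.length) m := by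
    simpa using listLe_take (hM.2.2 _ hx rfl) m.length
  exact hm.2.2 M (by simpa using hM) (listLe_antisymm hle hge ▸ List.take_prefix _ _)

theorem IsMinFin.unique {w m₁ m₂ : List A} (h₁ : IsMinFin r w m₁) (h₂ : IsMinFin r w m₂) :
    m₁ = m₂ := by
  wlog hle : m₁.length ≤ m₂.length generalizing m₁ m₂
  · exact (this h₂ h₁ (by omega)).symm
  have heq : m₁ = m₂.take m₁.length := by
    apply listLe_antisymm (r := r)
    · simpa using h₁.takeLe h₂.isInfix m₁.length le_rfl hle
    · simpa using h₂.takeLe h₁.isInfix m₁.length hle le_rfl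
  rcases hle.lt_or_eq with hlt | hlen
  · have := (List.take_prefix (m₁.length + 1) m₂).isInfix.trans h₂.isInfix
    rw [← List.take_concat_get' _ _ hlt, ← heq] at this
    exact absurd this (h₁.not_append_infix _)
  · rw [heq, hlen, List.take_length]

theorem IsMinFin.isSuffix {w m : List A} (hm : IsMinFin r w m) : m <:+ w := by
  obtain ⟨s, t, rfl⟩ := hm.isInfix
  cases t with
  | nil => exact ⟨s, by simp⟩
  | cons y t => exact absurd ⟨s, t, by simp⟩ (hm.not_append_infix y)

end MinFactor

section MinPsi

variable [DecidableEq A] {r : A → A → Prop} {z : A} {w m : List A}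

theorem IsMinFin.takeLe_psiW (hm : IsMinFin r w m) {u : List A} (hu : z :: u <:+: psiW z w) :
    TakeLe r (psiW z m) (z :: u) := by
  obtain ⟨t, ht, hut⟩ := exists_isSuffix_prefix_psiW hu
  exact ((hm.takeLe ht.isInfix).psiW z).of_isPrefix_right hut

variable [IsStrictTotalOrder A r]

theorem IsMinFin.not_psiW_append_infix (hm : IsMinFin r w m)
    (hlast : (psiW z w).getLast? ≠ some z) (x : A) : ¬ psiW z m ++ [x] <:+: psiW z w := by
  intro hx
  obtain ⟨u, hu⟩ : ∃ u, psiW z m = z :: u := by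
    obtain ⟨c, m, rfl⟩ := List.exists_cons_of_ne_nil hm.1
    exact ⟨_, psiW_cons z c m⟩
  rw [hu, List.cons_append] at hx
  obtain ⟨t, ht, hxt⟩ := exists_isSuffix_prefix_psiW hx
  rw [← List.cons_append, ← hu] at hxt
  rcases exists_append_prefix_of_psiW_append_prefix hxt with ⟨y, hy⟩ | hmz
  · exact hm.not_append_infix y (hy.isInfix.trans ht.isInfix)
  · obtain ⟨p, hp⟩ := hm.isSuffix
    apply hlast
    rw [getLast?_psiW, ← hp, List.getLast?_append, hmz]
    rfl

theorem isMinFin_psiW {c : A} (hm : IsMinFin r w (c :: m)) (hcz : ¬ r c z)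
    (hlast : (psiW z w).getLast? ≠ some z) : IsMinFin r (psiW z w) (psiW z (c :: m)) := by
  have hzx : ∀ x ∈ w, x ≠ z → r z x := by
    intro x hx hxz
    rcases trichotomous_of r c z with h | rfl | h
    · exact absurd h hcz
    · exact hm.rel_of_mem hx hxz
    · rcases eq_or_ne x c with rfl | hxc
      · exact h
      · exact trans_of r h (hm.rel_of_mem hx hxc)
  refine isMinFin_of_takeLe (by simp [psiW_cons]) (hm.isInfix.psiW z) (fun u hu => ?_)
    (hm.not_psiW_append_infix hlast)
  rcases u with _ | ⟨x, u⟩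
  · exact takeLe_of_isPrefix' List.nil_prefix
  by_cases hxz : x = z
  · subst hxz
    exact hm.takeLe_psiW hu
  · rw [psiW_cons]
    exact takeLe_cons_of_rel (hzx x (mem_of_mem_psiW z (hu.subset (by simp)) hxz) hxz) _ _

theorem isMinFin_tail_psiW {c : A} (hm : IsMinFin r w (c :: m)) (hcz : r c z)
    (hlast : (psiW z w).getLast? ≠ some z) : IsMinFin r (psiW z w) (c :: psiW z m) := by
  have hc : c ≠ z := fun h => irrefl_of r z (h ▸ hcz)
  have hψ : psiW z (c :: m) = z :: c :: psiW z m := by rw [psiW_cons, if_neg hc]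
  refine isMinFin_of_takeLe (List.cons_ne_nil _ _)
    ((List.suffix_cons z _).isInfix.trans (hψ ▸ hm.isInfix.psiW z)) (fun u hu => ?_)
    (fun x hx => hm.not_psiW_append_infix hlast x ?_)
  · rcases u with _ | ⟨x, u⟩
    · exact takeLe_of_isPrefix' List.nil_prefix
    by_cases hxz : x = z
    · subst hxz
      exact takeLe_cons_of_rel hcz _ _
    · exact (hψ ▸ hm.takeLe_psiW (cons_infix_psiW hxz hu)).of_cons (irrefl_of r z)
  · rw [hψ]
    exact cons_infix_psiW hc hx

end MinPsi

end Words

theorem min_psi_not_ending_general {A : Type*} [DecidableEq A]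
    (r : A → A → Prop) (hr : IsStrictTotalOrder A r) (z : A) (w w' : List A)
    (hw : w = psiW z w') (hlast : w.getLast? ≠ some z) :
    ∀ m m' : List A, IsMinFin r w m → IsMinFin r w' m' →
      (m.head? = some z → m = psiW z m') ∧
      (m.head? ≠ some z → z :: m = psiW z m') := by
  intro m m' hm hm'
  obtain ⟨c, m', rfl⟩ := List.exists_cons_of_ne_nil hm'.1
  subst hw
  by_cases hcz : r c z
  · have hc : c ≠ z := fun h => irrefl_of r z (h ▸ hcz)
    rw [hm.unique (isMinFin_tail_psiW hm' hcz hlast), psiW_cons, if_neg hc]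
    exact ⟨fun h => absurd (Option.some.inj h) hc, fun _ => rfl⟩
  · rw [hm.unique (isMinFin_psiW hm' hcz hlast), psiW_cons]
    exact ⟨fun _ => rfl, fun h => absurd rfl h⟩

/-- If `w = ψ_z(w')` with `w'` nonempty and `w` does not end with `z`, then
`min(w) = ψ_z(min(w'))` if `min(w)` begins with `z`, and `min(w) = z⁻¹ψ_z(min(w'))`
otherwise. -/
theorem min_psi_not_ending {A : Type*} [Fintype A] [DecidableEq A]
    (r : A → A → Prop) (hr : IsStrictTotalOrder A r) (z : A) (w w' : List A)
    (hw' : w' ≠ []) (hw : w = psiW z w') (hlast : w.getLast? ≠ some z) :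
    ∀ m m' : List A, IsMinFin r w m → IsMinFin r w' m' →
      (m.head? = some z → m = psiW z m') ∧
      (m.head? ≠ some z → z :: m = psiW z m') :=
  min_psi_not_ending_general r hr z w w' hw hlast
end

section
/- A finite word w over the two-letter alphabet {a, b} with a < b is not balanced if and only if there exists a finite word u such that aua is a prefix of min(w) and bub is a prefix of max(w). -/
/-
A binary word is unbalanced iff it has factors `bsb` and `asa` for a common `s`: walking along
two factors of equal length whose `b`-counts differ by two, two consecutive mismatches must both
be `(b, a)`, and `s` is what lies between them. Take such an `s` of minimal length. A factor `z`
of length `j ≤ |s| + 2` lexicographically below the prefix of `asa` of length `j` would first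
differ from it as `p·a` against `p·b`, with `p·b` a prefix of `as`; then `p = a·p'` and
`(ap'a, bp'b)` is a shorter such pair. So every prefix of `asa` is `min(w|j)`, and `min(w)`
extends `asa`; symmetrically `max(w)` extends `bsb`. Conversely `asa` and `bsb` witness
unbalancedness.
-/

section Words

variable {α : Type*}

theorem listLe_of_forall_prefix_ne {r : α → α → Prop} :
    ∀ {u v : List α}, u.length = v.length →
      (∀ p x y, p ++ [x] <+: u → p ++ [y] <+: v → x ≠ y → r x y) → listLe r u v
  | [], [], _, _ => Or.inl rfl
  | x :: u, y :: v, hl, h => by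
    by_cases hxy : x = y
    · subst hxy
      have ih : listLe r u v := listLe_of_forall_prefix_ne (by simpa using hl)
        fun p x' y' hx hy => h (x :: p) x' y' (by simpa using hx) (by simpa using hy)
      rcases ih with rfl | hlex
      · exact Or.inl rfl
      · exact Or.inr (.cons hlex)
    · exact Or.inr (.rel (h [] x y (by simp) (by simp) hxy))

theorem exists_prefix_maximal_chain {F : ℕ → List α → Prop} {N : ℕ}
    (hF : ∀ j c, F j c → c.length = j ∧ j ≤ N) {q : List α}
    (hq : ∀ j ≤ q.length, F j (q.take j)) :
    ∃ m, q <+: m ∧ (∀ j ≤ m.length, F j (m.take j)) ∧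
      ∀ m', F (m.length + 1) m' → ¬ m <+: m' := by
  classical
  let P : ℕ → Prop := fun l => ∃ c, q <+: c ∧ c.length = l ∧ ∀ j ≤ l, F j (c.take j)
  have hPq : P q.length := ⟨q, List.prefix_refl q, rfl, hq⟩
  have hqN : q.length ≤ N := by simpa using (hF _ _ (hq q.length le_rfl)).2
  obtain ⟨m, hqm, hml, hm⟩ := Nat.findGreatest_spec hqN hPq
  refine ⟨m, hqm, fun j hj => hm j (hml ▸ hj), fun m' hm' hmm' => ?_⟩
  obtain ⟨hm'l, hN⟩ := hF _ _ hm'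
  refine Nat.findGreatest_is_greatest (P := P) (by omega) hN
    ⟨m', hqm.trans hmm', hm'l, fun j hj => ?_⟩
  rcases Nat.lt_or_ge j (m.length + 1) with hj' | hj'
  · have hjm : m.take j = m'.take j :=
      List.prefix_iff_eq_take.mp ((List.take_prefix j m).trans hmm') |>.trans (by simp; omega)
    rw [← hjm]
    exact hm j (by omega)
  · rwa [show j = m'.length by omega, List.take_length, hm'l]

variable {r : α → α → Prop} {a b : α} {s w q m : List α}

theorem exists_isMinFin_of_forall_take (hq0 : q ≠ [])
    (hq : ∀ j ≤ q.length, IsMinFacLen r w j (q.take j)) :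
    ∃ m, IsMinFin r w m ∧ q <+: m := by
  obtain ⟨m, hqm, hm, hmax⟩ := exists_prefix_maximal_chain
    (fun _ _ h => ⟨h.2.1, h.2.1 ▸ h.1.length_le⟩) hq
  exact ⟨m, ⟨hqm.ne_nil hq0, hm, hmax⟩, hqm⟩

theorem exists_isMaxFin_of_forall_take (hq0 : q ≠ [])
    (hq : ∀ j ≤ q.length, IsMaxFacLen r w j (q.take j)) :
    ∃ m, IsMaxFin r w m ∧ q <+: m := by
  obtain ⟨m, hqm, hm, hmax⟩ := exists_prefix_maximal_chain
    (fun _ _ h => ⟨h.2.1, h.2.1 ▸ h.1.length_le⟩) hq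
  exact ⟨m, ⟨hqm.ne_nil hq0, hm, hmax⟩, hqm⟩

theorem IsMinFin.infix_of_prefix (hm : IsMinFin r w m) (hq : q <+: m) : q <:+: w := by
  simpa [← List.prefix_iff_eq_take.mp hq] using (hm.2.1 q.length hq.length_le).1

theorem IsMaxFin.infix_of_prefix (hm : IsMaxFin r w m) (hq : q <+: m) : q <:+: w := by
  simpa [← List.prefix_iff_eq_take.mp hq] using (hm.2.1 q.length hq.length_le).1

theorem not_infix_of_prefix_sandwich {p : List α} (hab : a ≠ b) (hb : b :: s ++ [b] <:+: w)
    (hs : ∀ t, a :: t ++ [a] <:+: w → b :: t ++ [b] <:+: w → s.length ≤ t.length)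
    (hp : p ++ [b] <+: a :: s ++ [a]) : ¬ p ++ [a] <:+: w := by
  intro hpa
  obtain _ | ⟨c, t⟩ := p
  · exact hab (List.cons_prefix_cons.mp hp).1.symm
  obtain ⟨hc, ht⟩ := List.cons_prefix_cons.mp hp
  rw [hc] at hpa
  have hts : t ++ [b] <+: s := by
    refine List.prefix_of_prefix_length_le ht (List.prefix_append s [a]) ?_
    by_contra hlen
    have hle := ht.length_le
    have heq : t ++ [b] = s ++ [a] := ht.eq_of_length (by simp at hlen hle ⊢; omega)
    exact hab (by simpa using (List.append_inj' heq rfl).2.symm)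
  have hbtb : b :: t ++ [b] <:+: w :=
    (List.cons_prefix_cons.mpr ⟨rfl, hts.trans (s.prefix_append [b])⟩).isInfix.trans hb
  have hst := hs t hpa hbtb
  have := hts.length_le
  simp at this
  omega

theorem isMinFacLen_take_sandwich (hα : ∀ x, x = a ∨ x = b) (hab : a ≠ b) (hr : r a b)
    (ha : a :: s ++ [a] <:+: w) (hb : b :: s ++ [b] <:+: w)
    (hs : ∀ t, a :: t ++ [a] <:+: w → b :: t ++ [b] <:+: w → s.length ≤ t.length)
    {j : ℕ} (hj : j ≤ s.length + 2) :
    IsMinFacLen r w j ((a :: s ++ [a]).take j) := by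
  have hlen : ((a :: s ++ [a]).take j).length = j := by simp; omega
  refine ⟨(List.take_prefix j _).isInfix.trans ha, hlen, fun z hz hzl =>
    listLe_of_forall_prefix_ne (hlen.trans hzl.symm) fun p y x hy hx hyx => ?_⟩
  obtain rfl | rfl := hα y <;> obtain rfl | rfl := hα x
  · exact absurd rfl hyx
  · exact hr
  · exact absurd (hx.isInfix.trans hz)
      (not_infix_of_prefix_sandwich hab hb hs (hy.trans (List.take_prefix _ _)))
  · exact absurd rfl hyx

theorem isMaxFacLen_take_sandwich (hα : ∀ x, x = a ∨ x = b) (hab : a ≠ b) (hr : r a b)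
    (ha : a :: s ++ [a] <:+: w) (hb : b :: s ++ [b] <:+: w)
    (hs : ∀ t, a :: t ++ [a] <:+: w → b :: t ++ [b] <:+: w → s.length ≤ t.length)
    {j : ℕ} (hj : j ≤ s.length + 2) :
    IsMaxFacLen r w j ((b :: s ++ [b]).take j) := by
  have hlen : ((b :: s ++ [b]).take j).length = j := by simp; omega
  refine ⟨(List.take_prefix j _).isInfix.trans hb, hlen, fun z hz hzl =>
    listLe_of_forall_prefix_ne (hzl.trans hlen.symm) fun p x y hx hy hxy => ?_⟩
  obtain rfl | rfl := hα y <;> obtain rfl | rfl := hα x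
  · exact absurd rfl hxy
  · exact absurd (hx.isInfix.trans hz) (not_infix_of_prefix_sandwich hab.symm ha
      (fun t h₁ h₂ => hs t h₂ h₁) (hy.trans (List.take_prefix _ _)))
  · exact hr
  · exact absurd rfl hxy

end Words

def HasSandwichPair (u v : List Bool) : Prop :=
  ∃ s, true :: s ++ [true] <:+: u ∧ false :: s ++ [false] <:+: v

theorem HasSandwichPair.mono {u v u' v' : List Bool} (hu : u <:+: u') (hv : v <:+: v')
    (h : HasSandwichPair u v) : HasSandwichPair u' v' :=
  let ⟨s, hsu, hsv⟩ := h
  ⟨s, hsu.trans hu, hsv.trans hv⟩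

theorem HasSandwichPair.cons {u v : List Bool} (x y : Bool) (h : HasSandwichPair u v) :
    HasSandwichPair (x :: u) (y :: v) :=
  h.mono (List.suffix_cons x u).isInfix (List.suffix_cons y v).isInfix

-- Short of a sandwich pair, the first mismatch of `u` and `v` is `(b, a)` once `u` has one more
-- `b`; the second conjunct needs this as induction hypothesis.
theorem prefix_or_hasSandwichPair_of_count :
    ∀ {u v : List Bool}, u.length = v.length →
      (v.count true + 1 ≤ u.count true →
        (∃ p, p ++ [true] <+: u ∧ p ++ [false] <+: v) ∨ HasSandwichPair u v) ∧
      (v.count true + 2 ≤ u.count true → HasSandwichPair u v)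
  | [], [], _ => by simp
  | x :: u, y :: v, hl => by
    obtain ⟨ih₁, ih₂⟩ :=
      prefix_or_hasSandwichPair_of_count (u := u) (v := v) (by simpa using hl)
    by_cases hxy : x = y
    · subst hxy
      have hc : ∀ k, (x :: v).count true + k ≤ (x :: u).count true ↔
          v.count true + k ≤ u.count true := by
        intro k
        cases x <;> simp
        omega
      refine ⟨fun h => ?_, fun h => (ih₂ ((hc 2).mp h)).cons x x⟩
      rcases ih₁ ((hc 1).mp h) with ⟨p, hpu, hpv⟩ | hpair
      · exact Or.inl ⟨x :: p, List.cons_prefix_cons.mpr ⟨rfl, hpu⟩,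
          List.cons_prefix_cons.mpr ⟨rfl, hpv⟩⟩
      · exact Or.inr (hpair.cons x x)
    obtain ⟨rfl, rfl⟩ | ⟨rfl, rfl⟩ :
        (x = true ∧ y = false) ∨ (x = false ∧ y = true) := by
      cases x <;> cases y <;> simp_all
    · refine ⟨fun _ => Or.inl ⟨[], by simp, by simp⟩, fun h => ?_⟩
      rcases ih₁ (by simpa using h) with ⟨p, hpu, hpv⟩ | hpair
      · exact ⟨p, (List.cons_prefix_cons.mpr ⟨rfl, hpu⟩).isInfix,
          (List.cons_prefix_cons.mpr ⟨rfl, hpv⟩).isInfix⟩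
      · exact hpair.cons _ _
    · exact ⟨fun h => Or.inr ((ih₂ (by simp at h; omega)).cons _ _),
        fun h => (ih₂ (by simp at h; omega)).cons _ _⟩

theorem not_balancedList_iff_hasSandwichPair {w : List Bool} :
    ¬ BalancedList w ↔ HasSandwichPair w w := by
  constructor
  · intro h
    simp only [BalancedList, not_forall, not_le] at h
    obtain ⟨u, v, hu, hv, hl, hc⟩ := h
    rcases lt_abs.mp hc with hc | hc
    · exact ((prefix_or_hasSandwichPair_of_count hl).2 (by omega)).mono hu hv
    · exact ((prefix_or_hasSandwichPair_of_count hl.symm).2 (by omega)).mono hv hu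
  · rintro ⟨s, hb, ha⟩ hbal
    have := hbal _ _ hb ha (by simp)
    simp [abs_le] at this
    omega

/-- A finite binary word `w` (with `a = false < b = true`) is not balanced
iff there is a finite word `u` such that `aua` is a prefix of `min(w)` and `bub` is a
prefix of `max(w)`. -/
theorem not_balanced_iff_prefix {w : List Bool} :
    ¬ BalancedList w ↔
      ∃ u m M : List Bool, IsMinFin (· < ·) w m ∧ IsMaxFin (· < ·) w M ∧
        (false :: u ++ [false]) <+: m ∧ (true :: u ++ [true]) <+: M := by
  rw [not_balancedList_iff_hasSandwichPair]
  constructor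
  · intro hpair
    obtain ⟨s, ⟨hb, ha⟩, hs⟩ := (measure List.length).wf.has_min _ hpair
    have hmin : ∀ t, false :: t ++ [false] <:+: w → true :: t ++ [true] <:+: w →
        s.length ≤ t.length := fun t ha hb => not_lt.mp (hs t ⟨hb, ha⟩)
    obtain ⟨m, hm, hsm⟩ := exists_isMinFin_of_forall_take (by simp) fun j hj =>
      isMinFacLen_take_sandwich (r := (· < ·)) Bool.dichotomy (by decide) (by decide) ha hb hmin
        (by simpa using hj)
    obtain ⟨M, hM, hsM⟩ := exists_isMaxFin_of_forall_take (by simp) fun j hj =>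
      isMaxFacLen_take_sandwich (r := (· < ·)) Bool.dichotomy (by decide) (by decide) ha hb hmin
        (by simpa using hj)
    exact ⟨s, m, M, hm, hM, hsm, hsM⟩
  · rintro ⟨u, m, M, hm, hM, hum, huM⟩
    exact ⟨u, hM.infix_of_prefix huM, hm.infix_of_prefix hum⟩
end

section
/- An infinite word t over a finite alphabet A has all of its factors finite episturmian if and only if t is episturmian or episkew. In particular, a recurrent infinite word all of whose factors are finite episturmian is episturmian. -/
section Helpers

variable {A : Type*}

private lemma factorAt_iff (t : ℕ → A) (u : List A) (i : ℕ) :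
    FactorAt t u i ↔ ∀ j (hj : j < u.length), u[j] = t (i + j) := by
  constructor
  · intro h j hj
    conv_lhs => rw [List.getElem_of_eq h]
    simp
  · intro h
    apply List.ext_getElem (by simp)
    intro n h1 h2
    simpa using h n h1

private lemma factorAt_prefixList (t : ℕ → A) (k : ℕ) : FactorAt t (prefixList t k) 0 := by
  rw [factorAt_iff]
  intro j hj
  simp only [prefixList, List.length_map, List.length_range] at hj
  simp [prefixList]

private lemma factorAt_trans {t s : ℕ → A} {u : List A} {i K p : ℕ}
    (hu : FactorAt t u i) (hK : FactorAt s (prefixList t K) p) (hle : i + u.length ≤ K) :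
    FactorAt s u (p + i) := by
  rw [factorAt_iff] at hu hK ⊢
  intro j hj
  have h1 := hu j hj
  have hjK : i + j < K := by omega
  have hlen : i + j < (prefixList t K).length := by
    simpa [prefixList] using hjK
  have h2 := hK (i + j) hlen
  have h3 : (prefixList t K)[i + j] = t (i + j) := by
    simp [prefixList]
  rw [h1, ← h3, h2]
  congr 1
  omega

private lemma host4 {t : ℕ → A} (H : ∀ u, IsFactorInf t u → FiniteEpisturmian u)
    {u1 u2 u3 u4 : List A} (h1 : IsFactorInf t u1) (h2 : IsFactorInf t u2)
    (h3 : IsFactorInf t u3) (h4 : IsFactorInf t u4) :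
    ∃ s, Episturmian s ∧ IsFactorInf s u1 ∧ IsFactorInf s u2 ∧ IsFactorInf s u3 ∧
      IsFactorInf s u4 := by
  obtain ⟨i1, h1⟩ := h1
  obtain ⟨i2, h2⟩ := h2
  obtain ⟨i3, h3⟩ := h3
  obtain ⟨i4, h4⟩ := h4
  set K := max (max (i1 + u1.length) (i2 + u2.length)) (max (i3 + u3.length) (i4 + u4.length))
    with hK
  have hw : IsFactorInf t (prefixList t K) := ⟨0, factorAt_prefixList t K⟩
  obtain ⟨s, hs, p, hp⟩ := H _ hw
  refine ⟨s, hs, ⟨p + i1, factorAt_trans h1 hp ?_⟩, ⟨p + i2, factorAt_trans h2 hp ?_⟩,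
    ⟨p + i3, factorAt_trans h3 hp ?_⟩, ⟨p + i4, factorAt_trans h4 hp ?_⟩⟩ <;> omega

private lemma left_ext {t : ℕ → A} (hrec : Recurrent t) {u : List A}
    (hu : IsFactorInf t u) : ∃ d, IsFactorInf t (d :: u) := by
  obtain ⟨i, hi, h⟩ := hrec u hu 1
  refine ⟨t (i - 1), i - 1, ?_⟩
  rw [factorAt_iff] at h ⊢
  intro j hj
  match j with
  | 0 => simp
  | j + 1 =>
    have hj' : j < u.length := by simpa using Nat.lt_of_succ_lt_succ hj
    have := h j hj'
    simp only [List.getElem_cons_succ]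
    rw [this]
    congr 1
    omega

private lemma right_ext {t : ℕ → A} {u : List A} (hu : IsFactorInf t u) :
    ∃ e, IsFactorInf t (u ++ [e]) := by
  obtain ⟨i, h⟩ := hu
  refine ⟨t (i + u.length), i, ?_⟩
  rw [factorAt_iff] at h ⊢
  intro j hj
  by_cases hj' : j < u.length
  · rw [List.getElem_append_left hj']
    exact h j hj'
  · have hje : j = u.length := by
      simp only [List.length_append, List.length_cons, List.length_nil] at hj
      omega
    subst hje
    simp

private lemma factorAt_append_left {t : ℕ → A} {x y : List A} {i : ℕ}
    (h : FactorAt t (x ++ y) i) : FactorAt t x i := by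
  rw [factorAt_iff] at h ⊢
  intro j hj
  have hj2 : j < (x ++ y).length := by simp; omega
  have := h j hj2
  rwa [List.getElem_append_left hj] at this

private lemma factorAt_cons_tail {t : ℕ → A} {b : A} {u : List A} {i : ℕ}
    (h : FactorAt t (b :: u) i) : FactorAt t u (i + 1) := by
  rw [factorAt_iff] at h ⊢
  intro j hj
  have := h (j + 1) (by simpa using Nat.succ_lt_succ hj)
  simp only [List.getElem_cons_succ] at this
  rw [this]
  congr 1
  omega

private lemma rs_unique {t : ℕ → A} (H : ∀ u, IsFactorInf t u → FiniteEpisturmian u) :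
    ∀ u v, RightSpecial t u → RightSpecial t v → u.length = v.length → u = v := by
  rintro u v ⟨a, b, hab, ha, hb⟩ ⟨a', b', hab', ha', hb'⟩ hlen
  obtain ⟨s, hs, f1, f2, f3, f4⟩ := host4 H ha hb ha' hb'
  exact hs.2 u v ⟨a, b, hab, f1, f2⟩ ⟨a', b', hab', f3, f4⟩ hlen

private lemma rev_closed {t : ℕ → A} (hrec : Recurrent t)
    (H : ∀ u, IsFactorInf t u → FiniteEpisturmian u) :
    ∀ u, IsFactorInf t u → IsFactorInf t u.reverse := by
  suffices h : ∀ n u, u.length = n → IsFactorInf t u → IsFactorInf t u.reverse from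
    fun u hu => h u.length u rfl hu
  intro n
  induction n using Nat.strong_induction_on with
  | _ n ih =>
  intro u hlen hu
  by_contra hru
  rcases u with _ | ⟨b, v'⟩
  · exact hru (by simpa using hu)
  · obtain rfl | ⟨w, c, rfl⟩ := v'.eq_nil_or_concat
    · exact hru (by simpa using hu)
    · -- u = b :: (w ++ [c]) ; set v = b :: w, so u = v ++ [c]
      simp only [List.concat_eq_append] at hlen hu hru
      have huv : b :: (w ++ [c]) = (b :: w) ++ [c] := by simp
      -- lengths
      have hn : n = w.length + 2 := by simp at hlen; omega
      -- v and v' are factors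
      have hvf : IsFactorInf t (b :: w) := by
        obtain ⟨i, hi⟩ := hu
        rw [huv] at hi
        exact ⟨i, factorAt_append_left hi⟩
      have hv'f : IsFactorInf t (w ++ [c]) := by
        obtain ⟨i, hi⟩ := hu
        exact ⟨i + 1, factorAt_cons_tail hi⟩
      -- reverses of shorter factors are factors (IH)
      have hRv : IsFactorInf t (b :: w).reverse :=
        ih (w.length + 1) (by omega) _ (by simp) hvf
      have hRv' : IsFactorInf t (w ++ [c]).reverse :=
        ih (w.length + 1) (by omega) _ (by simp) hv'f
      -- a left extension d ≠ c of (b :: w).reverse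
      obtain ⟨d, hd⟩ := left_ext hrec hRv
      have hdc : d ≠ c := by
        intro hdc
        apply hru
        have heq : (b :: (w ++ [c])).reverse = d :: (b :: w).reverse := by
          rw [hdc]; simp
        rwa [heq]
      -- a right extension e ≠ b of (w ++ [c]).reverse
      obtain ⟨e, he⟩ := right_ext hRv'
      have heb : e ≠ b := by
        intro heb
        apply hru
        have heq : (b :: (w ++ [c])).reverse = (w ++ [c]).reverse ++ [e] := by
          rw [heb]; simp
        rwa [heq]
      -- a common episturmian host
      obtain ⟨s, ⟨hsrev, hsrs⟩, f1, f2, f3, -⟩ := host4 H hu hd he hu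
      have fRu : IsFactorInf s (b :: (w ++ [c])).reverse := hsrev _ f1
      -- (b :: w) is right special in s
      have hvc : IsFactorInf s ((b :: w) ++ [c]) := by rwa [← huv]
      have hvd : IsFactorInf s ((b :: w) ++ [d]) := by
        have h2 := hsrev _ f2
        have heq : (d :: (b :: w).reverse).reverse = (b :: w) ++ [d] := by simp
        rwa [heq] at h2
      have rs1 : RightSpecial s (b :: w) := ⟨c, d, fun hcd => hdc hcd.symm, hvc, hvd⟩
      -- (w ++ [c]).reverse is right special in s
      have hb' : IsFactorInf s ((w ++ [c]).reverse ++ [b]) := by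
        have heq : (b :: (w ++ [c])).reverse = (w ++ [c]).reverse ++ [b] := by simp
        rwa [heq] at fRu
      have rs2 : RightSpecial s ((w ++ [c]).reverse) :=
        ⟨b, e, fun hbe => heb hbe.symm, hb', f3⟩
      -- uniqueness of right special factors in s
      have hveq : b :: w = (w ++ [c]).reverse := hsrs _ _ rs1 rs2 (by simp)
      -- hence b = c and w = w.reverse
      have hveq' : b :: w = c :: w.reverse := by simpa using hveq
      obtain ⟨hbc, hww⟩ : b = c ∧ w = w.reverse := by
        have := List.cons.injEq b w c w.reverse ▸ hveq'
        exact ⟨this.1, this.2⟩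
      apply hru
      have heq : (b :: (w ++ [c])).reverse = b :: (w ++ [c]) := by
        subst hbc
        simp [← hww]
      rwa [heq]

end Helpers

/-- An infinite word has all of its factors finite episturmian iff it is
episturmian or episkew; in particular a recurrent infinite word all of whose factors
are finite episturmian is episturmian. -/
theorem episturmian_wide_iff {A : Type*} [Fintype A] (t : ℕ → A) :
    ((∀ u, IsFactorInf t u → FiniteEpisturmian u) ↔ (Episturmian t ∨ Episkew t)) ∧
    (Recurrent t → (∀ u, IsFactorInf t u → FiniteEpisturmian u) → Episturmian t) := by
  constructor
  · constructor
    · intro H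
      by_cases hrec : Recurrent t
      · exact Or.inl ⟨rev_closed hrec H, rs_unique H⟩
      · exact Or.inr ⟨hrec, H⟩
    · rintro (h | h)
      · intro u hu
        exact ⟨t, h, hu⟩
      · exact h.2
  · intro hrec H
    exact ⟨rev_closed hrec H, rs_unique H⟩
end

section
/- An infinite word t over the two-letter alphabet {a, b} with a < b is balanced if and only if there exists an infinite word u over {a, b} such that a·u ≤ min(t) ≤ max(t) ≤ b·u in the lexicographic order. -/
namespace BalLex

/-! ### factors as windows -/

def fac (x : ℕ → Bool) (i n : ℕ) : List Bool := (List.range n).map (fun j => x (i + j))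

@[simp] lemma fac_length (x : ℕ → Bool) (i n : ℕ) : (fac x i n).length = n := by
  simp [fac]

@[simp] lemma fac_zero (x : ℕ → Bool) (i : ℕ) : fac x i 0 = [] := rfl

lemma fac_one (x : ℕ → Bool) (i : ℕ) : fac x i 1 = [x i] := by
  simp [fac, List.range_succ]

lemma fac_add (x : ℕ → Bool) (i a b : ℕ) :
    fac x i (a + b) = fac x i a ++ fac x (i + a) b := by
  unfold fac
  rw [List.range_add, List.map_append, List.map_map]
  congr 1
  apply List.map_congr_left
  intro j _
  simp [Function.comp, add_assoc]

lemma prefixList_eq_fac (x : ℕ → Bool) (k : ℕ) : prefixList x k = fac x 0 k := by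
  unfold prefixList fac
  apply List.map_congr_left
  intro j _
  simp

@[simp] lemma prefixList_length (x : ℕ → Bool) (k : ℕ) : (prefixList x k).length = k := by
  simp [prefixList]

lemma prefixList_succ (x : ℕ → Bool) (k : ℕ) :
    prefixList x (k + 1) = prefixList x k ++ [x k] := by
  simp [prefixList, List.range_succ]

lemma fac_congr {x y : ℕ → Bool} {i j n : ℕ} (h : ∀ l, l < n → x (i + l) = y (j + l)) :
    fac x i n = fac y j n := by
  unfold fac
  apply List.map_congr_left
  intro l hl
  exact h l (List.mem_range.mp hl)

lemma factorAt_fac (t : ℕ → Bool) (i n : ℕ) : FactorAt t (fac t i n) i := by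
  show fac t i n = _
  rw [fac_length]
  rfl

lemma isFactor_fac (t : ℕ → Bool) (i n : ℕ) : IsFactorInf t (fac t i n) :=
  ⟨i, factorAt_fac t i n⟩

lemma factorAt_eq_fac {t : ℕ → Bool} {u : List Bool} {i : ℕ} (h : FactorAt t u i) :
    u = fac t i u.length := h

lemma fac_getD {x : ℕ → Bool} {a n l : ℕ} (h : l < n) :
    (fac x a n).getD l false = x (a + l) := by
  rw [List.getD_eq_getElem?_getD]
  simp [fac, List.getElem?_range, h]

lemma fac_eq_vals {x y : ℕ → Bool} {a b n : ℕ} (h : fac x a n = fac y b n) :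
    ∀ l, l < n → x (a + l) = y (b + l) := by
  intro l hl
  have : (fac x a n).getD l false = (fac y b n).getD l false := congrArg (fun L => L.getD l false) h
  rwa [fac_getD hl, fac_getD hl] at this

/-! ### counting -/

def cnt (x : ℕ → Bool) (i n : ℕ) : ℕ := (fac x i n).count true

lemma cnt_add (x : ℕ → Bool) (i a b : ℕ) :
    cnt x i (a + b) = cnt x i a + cnt x (i + a) b := by
  simp [cnt, fac_add, List.count_append]

lemma cnt_one (x : ℕ → Bool) (i : ℕ) :
    cnt x i 1 = if x i = true then 1 else 0 := by
  cases h : x i <;> simp [cnt, fac_one, h]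

lemma cnt_congr {x y : ℕ → Bool} {i j n : ℕ} (h : ∀ l, l < n → x (i + l) = y (j + l)) :
    cnt x i n = cnt y j n := by
  unfold cnt
  rw [fac_congr (x := x) (y := y) h]

lemma cnt_split (x : ℕ → Bool) (p d : ℕ) :
    cnt x p (d + 2) = cnt x p 1 + cnt x (p + 1) d + cnt x (p + 1 + d) 1 := by
  rw [show d + 2 = 1 + (d + 1) by omega, cnt_add, show d + 1 = d + 1 from rfl, cnt_add]
  ring

lemma fac_split (x : ℕ → Bool) (p d : ℕ) :
    fac x p (d + 2) = x p :: fac x (p + 1) d ++ [x (p + 1 + d)] := by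
  rw [show d + 2 = 1 + (d + 1) by omega, fac_add, fac_one,
    show d + 1 = d + 1 from rfl, fac_add, fac_one]
  simp

lemma count_fac (x : ℕ → Bool) (i n : ℕ) : (fac x i n).count true = cnt x i n := rfl

/-! ### lex order helpers -/

lemma listLe_iff {u v : List Bool} : listLe (· < ·) u v ↔ u ≤ v := by
  constructor
  · rintro (rfl | h)
    · exact le_refl u
    · exact le_of_lt h
  · intro h
    rcases lt_or_eq_of_le h with h | h
    · exact Or.inr h
    · exact Or.inl h

lemma fac_decomp (x : ℕ → Bool) {i k : ℕ} (h : i < k) :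
    fac x 0 k = fac x 0 i ++ x i :: fac x (i + 1) (k - i - 1) := by
  have key : fac x 0 (i + (1 + (k - i - 1))) =
      fac x 0 i ++ x i :: fac x (i + 1) (k - i - 1) := by
    rw [fac_add, fac_add, fac_one]
    simp
  rw [show i + (1 + (k - i - 1)) = k by omega] at key
  exact key

lemma lex_middle {x y : ℕ → Bool} {i k : ℕ} (hik : i < k)
    (hagree : ∀ j, j < i → x j = y j) (hlt : x i < y i) :
    List.Lex (· < ·) (fac x 0 k) (fac y 0 k) := by
  rw [fac_decomp x hik, fac_decomp y hik]
  rw [show fac x 0 i = fac y 0 i from fac_congr (fun l hl => by simpa using hagree l hl)]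
  exact List.Lex.append_left _ (List.Lex.rel hlt) _

lemma lex_append_of_lex {p q : List Bool} (s s' : List Bool)
    (hlen : p.length = q.length) (h : List.Lex (· < ·) p q) :
    List.Lex (· < ·) (p ++ s) (q ++ s') := by
  induction p generalizing q with
  | nil =>
    cases q with
    | nil => cases h
    | cons b q' => simp at hlen
  | cons a p' ih =>
    cases q with
    | nil => simp at hlen
    | cons b q' =>
      cases h with
      | rel hr => exact List.Lex.rel hr
      | cons h' => exact List.Lex.cons (ih (by simpa using hlen) h')

lemma listLe_cons {c : Bool} {p q : List Bool} (h : listLe (· < ·) (c :: p) (c :: q)) :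
    listLe (· < ·) p q := by
  rcases h with h | h
  · exact Or.inl (by injection h)
  · cases h with
    | rel hr => exact absurd hr (lt_irrefl c)
    | cons h' => exact Or.inr h'

lemma listLe_append {w p q : List Bool} (h : listLe (· < ·) (w ++ p) (w ++ q)) :
    listLe (· < ·) p q := by
  induction w with
  | nil => simpa using h
  | cons c w' ih => exact ih (listLe_cons (by simpa using h))

lemma not_true_le_false : ¬ listLe (· < ·) [true] [false] := by
  rintro (h | h)
  · simp at h
  · cases h with
    | rel hr => exact absurd hr (by decide)

/-! ### infLe helpers -/

lemma prefix_le_of_infLe {x y : ℕ → Bool} (h : infLe (· < ·) x y) (k : ℕ) :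
    listLe (· < ·) (prefixList x k) (prefixList y k) := by
  rcases h with rfl | ⟨i, hagree, hlt⟩
  · exact Or.inl rfl
  · by_cases hik : i < k
    · refine Or.inr ?_
      rw [prefixList_eq_fac, prefixList_eq_fac]
      exact lex_middle hik hagree hlt
    · refine Or.inl ?_
      rw [prefixList_eq_fac, prefixList_eq_fac]
      exact fac_congr (fun l hl => by
        simpa using hagree l (lt_of_lt_of_le hl (not_lt.mp hik)))

lemma infLe_of_prefix_le {x y : ℕ → Bool}
    (h : ∀ k, listLe (· < ·) (prefixList x k) (prefixList y k)) :
    infLe (· < ·) x y := by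
  by_cases hxy : x = y
  · exact Or.inl hxy
  · have hne : ∃ i, x i ≠ y i := Function.ne_iff.mp hxy
    refine Or.inr ⟨Nat.find hne, fun j hj => not_not.mp (Nat.find_min hne hj), ?_⟩
    set i := Nat.find hne with hidef
    have hi : x i ≠ y i := Nat.find_spec hne
    have hagree : ∀ j, j < i → x j = y j := fun j hj => not_not.mp (Nat.find_min hne hj)
    cases hx : x i <;> cases hy : y i
    · exact absurd (hx.trans hy.symm) hi
    · decide
    · exfalso
      have hlex : List.Lex (· < ·) (prefixList y (i + 1)) (prefixList x (i + 1)) := by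
        rw [prefixList_eq_fac, prefixList_eq_fac]
        exact lex_middle (Nat.lt_succ_self i) (fun j hj => (hagree j hj).symm)
          (by rw [hx, hy]; decide)
      have hle : prefixList x (i + 1) ≤ prefixList y (i + 1) := listLe_iff.mp (h (i + 1))
      exact absurd (lt_of_lt_of_le (show prefixList y (i+1) < prefixList x (i+1) from hlex) hle)
        (lt_irrefl _)
    · exact absurd (hx.trans hy.symm) hi

lemma infLe_total (x y : ℕ → Bool) : infLe (· < ·) x y ∨ infLe (· < ·) y x := by
  by_cases hxy : x = y
  · exact Or.inl (Or.inl hxy)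
  · have hne : ∃ i, x i ≠ y i := Function.ne_iff.mp hxy
    set i := Nat.find hne with hidef
    have hi : x i ≠ y i := Nat.find_spec hne
    have hagree : ∀ j, j < i → x j = y j := fun j hj => not_not.mp (Nat.find_min hne hj)
    cases hx : x i <;> cases hy : y i
    · exact absurd (hx.trans hy.symm) hi
    · exact Or.inl (Or.inr ⟨i, hagree, by rw [hx, hy]; decide⟩)
    · exact Or.inr (Or.inr ⟨i, fun j hj => (hagree j hj).symm, by rw [hx, hy]; decide⟩)
    · exact absurd (hx.trans hy.symm) hi

lemma prefixList_eq_val {x y : ℕ → Bool} {n : ℕ}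
    (h : prefixList x (n + 1) = prefixList y (n + 1)) : x n = y n := by
  rw [prefixList_succ, prefixList_succ] at h
  have := (List.append_inj' h (by simp)).2
  simpa using this

/-! ### construction of min and max infinite factor words -/

open Classical in
noncomputable def minFac (t : ℕ → Bool) : ℕ → List Bool
  | 0 => []
  | k + 1 =>
    if IsFactorInf t (minFac t k ++ [false]) then minFac t k ++ [false]
    else minFac t k ++ [true]

open Classical in
noncomputable def maxFac (t : ℕ → Bool) : ℕ → List Bool
  | 0 => []
  | k + 1 =>
    if IsFactorInf t (maxFac t k ++ [true]) then maxFac t k ++ [true]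
    else maxFac t k ++ [false]

open Classical in
lemma minFac_succ_def (t : ℕ → Bool) (k : ℕ) :
    minFac t (k + 1) =
      if IsFactorInf t (minFac t k ++ [false]) then minFac t k ++ [false]
      else minFac t k ++ [true] := by
  rw [minFac]

open Classical in
lemma maxFac_succ_def (t : ℕ → Bool) (k : ℕ) :
    maxFac t (k + 1) =
      if IsFactorInf t (maxFac t k ++ [true]) then maxFac t k ++ [true]
      else maxFac t k ++ [false] := by
  rw [maxFac]

lemma minFac_succ (t : ℕ → Bool) (k : ℕ) :
    ∃ c, minFac t (k + 1) = minFac t k ++ [c] := by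
  rw [minFac_succ_def]
  split_ifs
  · exact ⟨false, rfl⟩
  · exact ⟨true, rfl⟩

lemma maxFac_succ (t : ℕ → Bool) (k : ℕ) :
    ∃ c, maxFac t (k + 1) = maxFac t k ++ [c] := by
  rw [maxFac_succ_def]
  split_ifs
  · exact ⟨true, rfl⟩
  · exact ⟨false, rfl⟩

lemma minFac_length (t : ℕ → Bool) (k : ℕ) : (minFac t k).length = k := by
  induction k with
  | zero => rfl
  | succ k ih =>
    obtain ⟨c, hc⟩ := minFac_succ t k
    rw [hc]
    simp [ih]

lemma maxFac_length (t : ℕ → Bool) (k : ℕ) : (maxFac t k).length = k := by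
  induction k with
  | zero => rfl
  | succ k ih =>
    obtain ⟨c, hc⟩ := maxFac_succ t k
    rw [hc]
    simp [ih]

lemma isFactor_nil (t : ℕ → Bool) : IsFactorInf t [] := ⟨0, by simp [FactorAt]⟩

lemma factor_ext {t : ℕ → Bool} {u : List Bool} (h : IsFactorInf t u) :
    ∃ c, IsFactorInf t (u ++ [c]) := by
  obtain ⟨i, hi⟩ := h
  have hu : u = fac t i u.length := hi
  refine ⟨t (i + u.length), i, ?_⟩
  have key : u ++ [t (i + u.length)] = fac t i (u.length + 1) := by
    rw [fac_add, fac_one]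
    rw [← hu]
  rw [show (u ++ [t (i + u.length)]) = fac t i (u.length + 1) from key]
  exact factorAt_fac t i (u.length + 1)

lemma minFac_isFactor (t : ℕ → Bool) (k : ℕ) : IsFactorInf t (minFac t k) := by
  induction k with
  | zero => exact isFactor_nil t
  | succ k ih =>
    rw [minFac_succ_def]
    split_ifs with h
    · exact h
    · obtain ⟨c, hc⟩ := factor_ext ih
      cases c with
      | false => exact absurd hc h
      | true => exact hc

lemma maxFac_isFactor (t : ℕ → Bool) (k : ℕ) : IsFactorInf t (maxFac t k) := by
  induction k with
  | zero => exact isFactor_nil t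
  | succ k ih =>
    rw [maxFac_succ_def]
    split_ifs with h
    · exact h
    · obtain ⟨c, hc⟩ := factor_ext ih
      cases c with
      | true => exact absurd hc h
      | false => exact hc

lemma minFac_min (t : ℕ → Bool) (k : ℕ) :
    ∀ u, IsFactorInf t u → u.length = k → listLe (· < ·) (minFac t k) u := by
  induction k with
  | zero =>
    intro u _ hlen
    rw [List.length_eq_zero_iff] at hlen
    subst hlen
    exact Or.inl rfl
  | succ k ih =>
    intro u hu hlen
    obtain ⟨i, hi⟩ := hu
    have hu' : u = fac t i (k + 1) := by
      have := factorAt_eq_fac hi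
      rwa [hlen] at this
    have hsplit : u = fac t i k ++ [t (i + k)] := by
      rw [hu', fac_add, fac_one]
    have hfk : IsFactorInf t (fac t i k) := isFactor_fac t i k
    rcases ih (fac t i k) hfk (fac_length t i k) with heq | hlex
    · -- minFac t k = fac t i k
      rw [hsplit, ← heq, minFac_succ_def]
      split_ifs with hf
      · cases hc : t (i + k) with
        | false => exact Or.inl rfl
        | true =>
          exact Or.inr (List.Lex.append_left _ (List.Lex.rel (by decide)) _)
      · cases hc : t (i + k) with
        | false =>
          exfalso
          apply hf
          rw [heq, ← hc]
          rw [← hsplit]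
          exact ⟨i, hi⟩
        | true => exact Or.inl rfl
    · obtain ⟨c, hc⟩ := minFac_succ t k
      rw [hc, hsplit]
      exact Or.inr (lex_append_of_lex _ _ (by rw [minFac_length, fac_length]) hlex)

lemma maxFac_max (t : ℕ → Bool) (k : ℕ) :
    ∀ u, IsFactorInf t u → u.length = k → listLe (· < ·) u (maxFac t k) := by
  induction k with
  | zero =>
    intro u _ hlen
    rw [List.length_eq_zero_iff] at hlen
    subst hlen
    exact Or.inl rfl
  | succ k ih =>
    intro u hu hlen
    obtain ⟨i, hi⟩ := hu
    have hu' : u = fac t i (k + 1) := by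
      have := factorAt_eq_fac hi
      rwa [hlen] at this
    have hsplit : u = fac t i k ++ [t (i + k)] := by
      rw [hu', fac_add, fac_one]
    have hfk : IsFactorInf t (fac t i k) := isFactor_fac t i k
    rcases ih (fac t i k) hfk (fac_length t i k) with heq | hlex
    · rw [hsplit, heq, maxFac_succ_def]
      split_ifs with hf
      · cases hc : t (i + k) with
        | true => exact Or.inl rfl
        | false =>
          exact Or.inr (List.Lex.append_left _ (List.Lex.rel (by decide)) _)
      · cases hc : t (i + k) with
        | true =>
          exfalso
          apply hf
          rw [← heq, ← hc, ← hsplit]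
          exact ⟨i, hi⟩
        | false => exact Or.inl rfl
    · obtain ⟨c, hc⟩ := maxFac_succ t k
      rw [hc, hsplit]
      exact Or.inr (lex_append_of_lex _ _ (by rw [fac_length, maxFac_length]) hlex)

noncomputable def mInf (t : ℕ → Bool) : ℕ → Bool :=
  fun n => ((minFac t (n + 1)).getLast?).getD false

noncomputable def MInf (t : ℕ → Bool) : ℕ → Bool :=
  fun n => ((maxFac t (n + 1)).getLast?).getD false

lemma prefixList_mInf (t : ℕ → Bool) (k : ℕ) : prefixList (mInf t) k = minFac t k := by
  induction k with
  | zero => rfl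
  | succ k ih =>
    obtain ⟨c, hc⟩ := minFac_succ t k
    rw [prefixList_succ, ih, hc]
    congr 1
    show [((minFac t (k + 1)).getLast?).getD false] = [c]
    rw [hc, List.getLast?_concat]
    rfl

lemma prefixList_MInf (t : ℕ → Bool) (k : ℕ) : prefixList (MInf t) k = maxFac t k := by
  induction k with
  | zero => rfl
  | succ k ih =>
    obtain ⟨c, hc⟩ := maxFac_succ t k
    rw [prefixList_succ, ih, hc]
    congr 1
    show [((maxFac t (k + 1)).getLast?).getD false] = [c]
    rw [hc, List.getLast?_concat]
    rfl

lemma isMinInf_mInf (t : ℕ → Bool) : IsMinInf (· < ·) t (mInf t) := by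
  intro k
  rw [prefixList_mInf]
  exact ⟨minFac_isFactor t k, minFac_min t k⟩

lemma isMaxInf_MInf (t : ℕ → Bool) : IsMaxInf (· < ·) t (MInf t) := by
  intro k
  rw [prefixList_MInf]
  exact ⟨maxFac_isFactor t k, fun u hu hl => maxFac_max t k u hu hl⟩

lemma isMaxInf_unique {t M M' : ℕ → Bool}
    (h : IsMaxInf (· < ·) t M) (h' : IsMaxInf (· < ·) t M') : M = M' := by
  funext n
  apply prefixList_eq_val (n := n)
  have h1 : listLe (· < ·) (prefixList M (n+1)) (prefixList M' (n+1)) :=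
    (h' (n+1)).2 _ (h (n+1)).1 (by simp)
  have h2 : listLe (· < ·) (prefixList M' (n+1)) (prefixList M (n+1)) :=
    (h (n+1)).2 _ (h' (n+1)).1 (by simp)
  exact le_antisymm (listLe_iff.mp h1) (listLe_iff.mp h2)

/-! ### the unbalance lemma -/

lemma balanced_of_cnt {t : ℕ → Bool}
    (h : ∀ n i i', |(cnt t i n : ℤ) - (cnt t i' n : ℤ)| ≤ 1) : BalancedInf t := by
  intro u v hu hv hlen
  obtain ⟨i, hi⟩ := hu
  obtain ⟨i', hi'⟩ := hv
  rw [factorAt_eq_fac hi, factorAt_eq_fac hi', count_fac, count_fac, hlen]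
  exact h v.length i i'

lemma exists_awa_bwb {t : ℕ → Bool} (h : ¬ BalancedInf t) :
    ∃ w : List Bool, IsFactorInf t (false :: w ++ [false]) ∧
      IsFactorInf t (true :: w ++ [true]) := by
  have hP : ∃ n, ∃ i i', cnt t i' n + 2 ≤ cnt t i n := by
    by_contra hc
    push_neg at hc
    exact h (balanced_of_cnt (fun n i i' => by
      have h1 := hc n i i'
      have h2 := hc n i' i
      rw [abs_le]
      omega))
  classical
  obtain ⟨i, i', hvio⟩ := Nat.find_spec hP
  have hmin : ∀ k, k < Nat.find hP → ∀ a a', ¬ (cnt t a' k + 2 ≤ cnt t a k) := by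
    intro k hk a a' hcon
    exact Nat.find_min hP hk ⟨a, a', hcon⟩
  obtain ⟨m, hm⟩ : ∃ m, Nat.find hP = m + 1 := by
    refine ⟨Nat.find hP - 1, ?_⟩
    have : Nat.find hP ≠ 0 := by
      intro h0
      rw [h0] at hvio
      simp [cnt] at hvio
    omega
  rw [hm] at hvio
  rw [hm] at hmin
  -- rewrite the window splits
  have cnt_succ_left : ∀ p k, cnt t p (k + 1) = cnt t p 1 + cnt t (p + 1) k := by
    intro p k
    rw [show k + 1 = 1 + k by omega, cnt_add]
  -- head letters
  have hti : t i = true := by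
    by_contra hf
    have hf' : t i = false := by simpa using hf
    have e1 : cnt t i (m + 1) = cnt t (i + 1) m := by
      rw [cnt_succ_left, cnt_one, hf']
      simp
    have e2 : cnt t i' (m + 1) = cnt t i' 1 + cnt t (i' + 1) m := cnt_succ_left i' m
    exact hmin m (by omega) (i + 1) (i' + 1) (by omega)
  have hti' : t i' = false := by
    by_contra hf
    have hf' : t i' = true := by simpa using hf
    have e1 : cnt t i' (m + 1) = 1 + cnt t (i' + 1) m := by
      rw [cnt_succ_left, cnt_one, hf']
      simp
    have e2 : cnt t i (m + 1) = cnt t i 1 + cnt t (i + 1) m := cnt_succ_left i m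
    have e3 : cnt t i 1 ≤ 1 := by
      rw [cnt_one]
      split_ifs <;> omega
    exact hmin m (by omega) (i + 1) (i' + 1) (by omega)
  -- first interior difference
  by_cases hall : ∀ j, 1 ≤ j → j ≤ m → t (i + j) = t (i' + j)
  · exfalso
    have e0 : cnt t (i + 1) m = cnt t (i' + 1) m := by
      apply cnt_congr
      intro l hl
      have := hall (1 + l) (by omega) (by omega)
      rw [show i + 1 + l = i + (1 + l) by omega, show i' + 1 + l = i' + (1 + l) by omega]
      exact this
    have e1 : cnt t i (m + 1) = 1 + cnt t (i + 1) m := by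
      rw [cnt_succ_left, cnt_one, hti]
      simp
    have e2 : cnt t i' (m + 1) = cnt t (i' + 1) m := by
      rw [cnt_succ_left, cnt_one, hti']
      simp
    omega
  · push_neg at hall
    have hQ : ∃ j, 1 ≤ j ∧ j ≤ m ∧ t (i + j) ≠ t (i' + j) := hall
    obtain ⟨hj1, hjm, hjne⟩ := Nat.find_spec hQ
    have hjmin : ∀ l, 1 ≤ l → l < Nat.find hQ → t (i + l) = t (i' + l) := by
      intro l hl1 hlj
      by_contra hc
      exact Nat.find_min hQ hlj ⟨hl1, by omega, hc⟩
    obtain ⟨d, hd⟩ : ∃ d, Nat.find hQ = d + 1 := ⟨Nat.find hQ - 1, by omega⟩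
    rw [hd] at hj1 hjm hjne hjmin
    have hcommon : cnt t (i + 1) d = cnt t (i' + 1) d := by
      apply cnt_congr
      intro l hl
      have := hjmin (1 + l) (by omega) (by omega)
      rw [show i + 1 + l = i + (1 + l) by omega, show i' + 1 + l = i' + (1 + l) by omega]
      exact this
    have hfcommon : fac t (i + 1) d = fac t (i' + 1) d := by
      apply fac_congr
      intro l hl
      have := hjmin (1 + l) (by omega) (by omega)
      rw [show i + 1 + l = i + (1 + l) by omega, show i' + 1 + l = i' + (1 + l) by omega]
      exact this
    cases hb : t (i + (d + 1)) <;> cases hb' : t (i' + (d + 1))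
    · simp [hb, hb'] at hjne
    · -- t(i+j) = false, t(i'+j) = true : contradiction via suffixes
      exfalso
      have s_i : cnt t i (m + 1) = cnt t i (d + 2) + cnt t (i + (d + 2)) (m - d - 1) := by
        rw [← cnt_add]
        congr 1
        omega
      have s_i' : cnt t i' (m + 1) = cnt t i' (d + 2) + cnt t (i' + (d + 2)) (m - d - 1) := by
        rw [← cnt_add]
        congr 1
        omega
      have e_i : cnt t i (d + 2) = 1 + cnt t (i + 1) d := by
        rw [cnt_split, cnt_one, cnt_one, hti, show i + 1 + d = i + (d + 1) by omega, hb]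
        simp
      have e_i' : cnt t i' (d + 2) = 1 + cnt t (i' + 1) d := by
        rw [cnt_split, cnt_one, cnt_one, hti', show i' + 1 + d = i' + (d + 1) by omega, hb']
        simp
        omega
      exact hmin (m - d - 1) (by omega) (i + (d + 2)) (i' + (d + 2)) (by omega)
    · -- t(i+j) = true, t(i'+j) = false : produce the witness
      refine ⟨fac t (i' + 1) d, ⟨i', ?_⟩, ⟨i, ?_⟩⟩
      · have key : (false : Bool) :: fac t (i' + 1) d ++ [false] = fac t i' (d + 2) := by
          rw [fac_split, hti', show i' + 1 + d = i' + (d + 1) by omega, hb']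
        rw [show ((false : Bool) :: fac t (i' + 1) d ++ [false]) = fac t i' (d + 2) from key]
        exact factorAt_fac t i' (d + 2)
      · have key : (true : Bool) :: fac t (i' + 1) d ++ [true] = fac t i (d + 2) := by
          rw [fac_split, hti, show i + 1 + d = i + (d + 1) by omega, hb, hfcommon]
        rw [show ((true : Bool) :: fac t (i' + 1) d ++ [true]) = fac t i (d + 2) from key]
        exact factorAt_fac t i (d + 2)
    · simp [hb, hb'] at hjne

lemma bool_lt {a b : Bool} (h : a < b) : a = false ∧ b = true := by
  revert h
  cases a <;> cases b <;> decide

lemma prefixList_consInf (c : Bool) (x : ℕ → Bool) (k : ℕ) :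
    prefixList (consInf c x) (k + 1) = c :: prefixList x k := by
  rw [prefixList, List.range_succ_eq_map, List.map_cons, List.map_map]
  rfl

lemma prefixList_one (x : ℕ → Bool) : prefixList x 1 = [x 0] := by
  rw [prefixList_succ]
  rfl

theorem main (t : ℕ → Bool) :
    BalancedInf t ↔
      ∃ u : ℕ → Bool, ∀ m M : ℕ → Bool,
        IsMinInf (· < ·) t m → IsMaxInf (· < ·) t M →
          infLe (· < ·) (consInf false u) m ∧ infLe (· < ·) m M ∧
            infLe (· < ·) M (consInf true u) := by
  constructor
  · intro hbal
    refine ⟨fun n => MInf t (n + 1), ?_⟩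
    intro m M hm hM
    have hMeq : M = MInf t := isMaxInf_unique hM (isMaxInf_MInf t)
    refine ⟨?_, ?_, ?_⟩
    · -- a·u ≤ m
      rcases infLe_total (consInf (false : Bool) (fun n => MInf t (n + 1))) m with h | h
      · exact h
      rcases h with heq | ⟨i, hag, hlt⟩
      · exact Or.inl heq.symm
      exfalso
      have hi0 : i ≠ 0 := by
        intro h0
        rw [h0] at hlt
        have hcz : consInf (false : Bool) (fun n => MInf t (n + 1)) 0 = false := rfl
        rw [hcz] at hlt
        exact absurd hlt (by cases m 0 <;> decide)
      obtain ⟨d, rfl⟩ : ∃ d, i = d + 1 := ⟨i - 1, by omega⟩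
      obtain ⟨hmd, hcd⟩ := bool_lt hlt
      have hMd : MInf t (d + 1) = true := hcd
      have hm0 : m 0 = false := hag 0 (by omega)
      have hagree : ∀ l, l < d → m (1 + l) = MInf t (1 + l) := by
        intro l hl
        have h' := hag (1 + l) (by omega)
        refine h'.trans ?_
        rw [show 1 + l = l + 1 by omega]
        rfl
      have hA : IsFactorInf t (prefixList m (d + 2)) := (hm (d + 2)).1
      have hB : IsFactorInf t (prefixList (MInf t) (d + 2)) := (isMaxInf_MInf t (d + 2)).1
      have hbal' := hbal _ _ hB hA (by simp)
      rw [prefixList_eq_fac, prefixList_eq_fac, count_fac, count_fac] at hbal'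
      have hm1d : m (1 + d) = false := by rw [show 1 + d = d + 1 by omega]; exact hmd
      have hM1d : MInf t (1 + d) = true := by rw [show 1 + d = d + 1 by omega]; exact hMd
      have hcnteq : cnt (MInf t) 1 d = cnt m 1 d :=
        cnt_congr (fun l hl => (hagree l hl).symm)
      have cA : cnt m 0 (d + 2) = cnt m 1 d := by
        rw [cnt_split]
        simp only [Nat.zero_add]
        rw [cnt_one, cnt_one, hm0, hm1d]
        simp
      have cB : cnt (MInf t) 0 (d + 2) =
          (if MInf t 0 = true then 1 else 0) + cnt m 1 d + 1 := by
        rw [cnt_split]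
        simp only [Nat.zero_add]
        rw [cnt_one, cnt_one, hM1d, hcnteq]
        simp
      cases hM0 : MInf t 0 with
      | true =>
        rw [hM0] at cB
        simp at cB
        rw [cA, cB] at hbal'
        rw [abs_le] at hbal'
        omega
      | false =>
        obtain ⟨p, hp⟩ := hB
        have hfac : fac (MInf t) 0 (d + 2) = fac t p (d + 2) := by
          have h' := factorAt_eq_fac hp
          rw [prefixList_length] at h'
          rwa [prefixList_eq_fac] at h'
        have hval := fac_eq_vals hfac (d + 1) (by omega)
        have htrue : t (p + (d + 1)) = true := by
          rw [← hval]
          simpa using hMd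
        have h1fac : IsFactorInf t [true] := by
          have hone : fac t (p + (d + 1)) 1 = [true] := by rw [fac_one, htrue]
          rw [← hone]
          exact isFactor_fac t (p + (d + 1)) 1
        have hle1 := (isMaxInf_MInf t 1).2 [true] h1fac rfl
        rw [prefixList_one, hM0] at hle1
        exact not_true_le_false hle1
    · -- m ≤ M
      exact infLe_of_prefix_le (fun k =>
        (hM k).2 (prefixList m k) (hm k).1 (prefixList_length m k))
    · -- M ≤ b·u
      rw [hMeq]
      cases h0 : MInf t 0 with
      | false =>
        refine Or.inr ⟨0, fun j hj => absurd hj (by omega), ?_⟩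
        rw [h0]
        exact (by decide : (false : Bool) < true)
      | true =>
        refine Or.inl (funext fun n => ?_)
        cases n with
        | zero => exact h0
        | succ k => rfl
  · rintro ⟨u, hu⟩
    obtain ⟨h1, h2, h3⟩ := hu (mInf t) (MInf t) (isMinInf_mInf t) (isMaxInf_MInf t)
    by_contra hnb
    obtain ⟨w, hfa, hfb⟩ := exists_awa_bwb hnb
    have hminle : listLe (· < ·) (prefixList (mInf t) (w.length + 2))
        ((false : Bool) :: w ++ [false]) :=
      (isMinInf_mInf t (w.length + 2)).2 _ hfa (by simp)
    have hmaxge : listLe (· < ·) ((true : Bool) :: w ++ [true])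
        (prefixList (MInf t) (w.length + 2)) :=
      (isMaxInf_MInf t (w.length + 2)).2 _ hfb (by simp)
    have ha := prefix_le_of_infLe h1 (w.length + 2)
    have hb := prefix_le_of_infLe h3 (w.length + 2)
    have hconsf : prefixList (consInf false u) (w.length + 2) =
        (false : Bool) :: prefixList u (w.length + 1) := prefixList_consInf false u (w.length + 1)
    have hconst : prefixList (consInf true u) (w.length + 2) =
        (true : Bool) :: prefixList u (w.length + 1) := prefixList_consInf true u (w.length + 1)
    have c1 : ((false : Bool) :: prefixList u (w.length + 1)) ≤ (false : Bool) :: (w ++ [false]) := by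
      have := le_trans (listLe_iff.mp ha) (listLe_iff.mp hminle)
      rwa [hconsf] at this
    have c2 : ((true : Bool) :: (w ++ [true])) ≤ (true : Bool) :: prefixList u (w.length + 1) := by
      have := le_trans (listLe_iff.mp hmaxge) (listLe_iff.mp hb)
      rwa [hconst] at this
    have d1 : listLe (· < ·) (prefixList u (w.length + 1)) (w ++ [false]) :=
      listLe_cons (listLe_iff.mpr c1)
    have d2 : listLe (· < ·) (w ++ [true]) (prefixList u (w.length + 1)) :=
      listLe_cons (listLe_iff.mpr c2)
    have d3 : listLe (· < ·) (w ++ [true]) (w ++ [false]) :=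
      listLe_iff.mpr (le_trans (listLe_iff.mp d2) (listLe_iff.mp d1))
    exact not_true_le_false (listLe_append d3)

end BalLex

/-- An infinite binary word `t` (with `a = false < b = true`) is balanced iff
there exists an infinite word `u` such that `a·u ≤ min(t) ≤ max(t) ≤ b·u`. -/
theorem balanced_iff_lex (t : ℕ → Bool) :
    BalancedInf t ↔
      ∃ u : ℕ → Bool, ∀ m M : ℕ → Bool,
        IsMinInf (· < ·) t m → IsMaxInf (· < ·) t M →
          infLe (· < ·) (consInf false u) m ∧ infLe (· < ·) m M ∧
            infLe (· < ·) M (consInf true u) := by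
  exact BalLex.main t
end
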